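/- Suppose every vertex of G has degree at least 2. If u is a user and i is an item such that {u,i} is not an edge of G and the item-based effectiveness score s^item_{u,i} is strictly positive, then u and i are connected in G and their graph distance in G is exactly 3. In other words, every item selected by collaborative edge addition via the item-based score is a 3-hop neighbor of the target user. -/

import Mathlib

/-!
Users are the type `U`, items the type `I`, and the bipartite interaction graph `G`
lives on the disjoint union `U ⊕ I`.
-/

/-- The Adamic–Adar score `AA(x,y) = Σ_{k ∈ N(x) ∩ N(y)} 1 / log d(k)`. -/
noncomputable def adamicAdar {V : Type*} [Fintype V] [DecidableEq V]
    (G : SimpleGraph V) [DecidableRel G.Adj] (x y : V) : ℝ :=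
  ∑ k ∈ G.neighborFinset x ∩ G.neighborFinset y, 1 / Real.log (G.degree k : ℝ)

/-- The item-based effectiveness score
`s^item_{u,i} = (1/d(u)) · Σ_{j ∈ N(u)} AA(i,j)`. -/
noncomputable def sItem {U I : Type*} [Fintype U] [Fintype I] [DecidableEq U] [DecidableEq I]
    (G : SimpleGraph (U ⊕ I)) [DecidableRel G.Adj] (u : U) (i : I) : ℝ :=
  (1 / (G.degree (Sum.inl u) : ℝ)) *
    ∑ j ∈ Finset.univ.filter (fun j : I => G.Adj (Sum.inl u) (Sum.inr j)),
      adamicAdar G (Sum.inr i) (Sum.inr j)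

def sumSideColoring {U I : Type*} (G : SimpleGraph (U ⊕ I))
    (hbip : ∀ x y, G.Adj x y → (x.isLeft ∧ y.isRight) ∨ (x.isRight ∧ y.isLeft)) :
    G.Coloring Bool :=
  SimpleGraph.Coloring.mk Sum.isLeft fun {x y} h => by
    rcases x with x | x <;> rcases y with y | y <;> simp_all

theorem SimpleGraph.Coloring.odd_dist {V : Type*} {G : SimpleGraph V} (c : G.Coloring Bool)
    {u v : V} (h : G.Reachable u v) (huv : c u ≠ c v) : Odd (G.dist u v) := by
  obtain ⟨p, hp⟩ := h.exists_walk_length_eq_dist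
  rw [← hp, c.odd_length_iff_not_congr p]
  cases hu : c u <;> cases hv : c v <;> simp_all

theorem exists_adj_adj_of_adamicAdar_ne_zero {V : Type*} [Fintype V] [DecidableEq V]
    {G : SimpleGraph V} [DecidableRel G.Adj] {x y : V} (h : adamicAdar G x y ≠ 0) :
    ∃ k, G.Adj x k ∧ G.Adj y k := by
  obtain ⟨k, hk, -⟩ := Finset.exists_ne_zero_of_sum_ne_zero h
  exact ⟨k, by simpa using hk⟩

theorem exists_adj_adamicAdar_ne_zero_of_sItem_ne_zero {U I : Type*} [Fintype U] [Fintype I]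
    [DecidableEq U] [DecidableEq I] {G : SimpleGraph (U ⊕ I)} [DecidableRel G.Adj] {u : U} {i : I}
    (h : sItem G u i ≠ 0) :
    ∃ j, G.Adj (Sum.inl u) (Sum.inr j) ∧ adamicAdar G (Sum.inr i) (Sum.inr j) ≠ 0 := by
  obtain ⟨j, hj, hAA⟩ := Finset.exists_ne_zero_of_sum_ne_zero (right_ne_zero_of_mul h)
  exact ⟨j, (Finset.mem_filter.mp hj).2, hAA⟩

theorem dist_eq_three_of_sItem_pos_general
    {U I : Type*} [Fintype U] [Fintype I] [DecidableEq U] [DecidableEq I]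
    (G : SimpleGraph (U ⊕ I)) [DecidableRel G.Adj]
    (hbip : ∀ x y, G.Adj x y → (x.isLeft ∧ y.isRight) ∨ (x.isRight ∧ y.isLeft))
    (u : U) (i : I)
    (hne : ¬ G.Adj (Sum.inl u) (Sum.inr i))
    (hpos : 0 < sItem G u i) :
    G.Reachable (Sum.inl u) (Sum.inr i) ∧ G.dist (Sum.inl u) (Sum.inr i) = 3 := by
  obtain ⟨j, huj, hAA⟩ := exists_adj_adamicAdar_ne_zero_of_sItem_ne_zero hpos.ne'
  obtain ⟨k, hik, hjk⟩ := exists_adj_adj_of_adamicAdar_ne_zero hAA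
  let p : G.Walk (Sum.inl u) (Sum.inr i) := .cons huj (.cons hjk (.cons hik.symm .nil))
  have hreach : G.Reachable (Sum.inl u) (Sum.inr i) := ⟨p⟩
  have hle : G.dist (Sum.inl u) (Sum.inr i) ≤ 3 := SimpleGraph.dist_le p
  have hne1 : G.dist (Sum.inl u) (Sum.inr i) ≠ 1 :=
    fun h => hne (SimpleGraph.dist_eq_one_iff_adj.mp h)
  obtain ⟨m, hm⟩ := (sumSideColoring G hbip).odd_dist hreach Bool.noConfusion
  exact ⟨hreach, by omega⟩

/-- If every vertex has degree at least 2, `{u,i}` is not an edge of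
`G`, and `s^item_{u,i} > 0`, then `u` and `i` are connected in `G` and their graph
distance in `G` is exactly 3. -/
theorem dist_eq_three_of_sItem_pos
    {U I : Type*} [Fintype U] [Fintype I] [DecidableEq U] [DecidableEq I]
    (G : SimpleGraph (U ⊕ I)) [DecidableRel G.Adj]
    (hbip : ∀ x y, G.Adj x y → (x.isLeft ∧ y.isRight) ∨ (x.isRight ∧ y.isLeft))
    (hdeg : ∀ x, 2 ≤ G.degree x)
    (u : U) (i : I)
    (hne : ¬ G.Adj (Sum.inl u) (Sum.inr i))
    (hpos : 0 < sItem G u i) :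
    G.Reachable (Sum.inl u) (Sum.inr i) ∧ G.dist (Sum.inl u) (Sum.inr i) = 3 :=
  dist_eq_three_of_sItem_pos_general G hbip u i hne hpos
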